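/- arXiv:1411.2044 — 2 statements merged into one kernel-verified Lean document; each statement's English description precedes it below -/
import Mathlib

section
/- Define J_{k,i}(a,x,q) as in Andrews (7.2.2) with a = 0: J_{k,i}(0,x,q) = ∑_{n≥0} (-1)^n x^{kn} q^{kn+kn^2+n−in+C(n,2)} (1 − x^i q^{i+2ni}) / ((q)_n (xq^{n+1})_∞), where (q)_n = (1−q)⋯(1−q^n) and (y)_∞ = ∏_{m≥0}(1−yq^m). Then for every j ≥ 0, J_{k,1}(0,q^j,q) = J_{k,k}(0,q^{j+1},q). -/
open PowerSeries Finset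

/-- Truncation-based formal infinite product `∏_{m, P m} (1 - q^m)` in `ℚ⟦q⟧`
(valid when `P m → 1 ≤ m`). -/
noncomputable def sProd (P : ℕ → Prop) [DecidablePred P] : PowerSeries ℚ :=
  PowerSeries.mk fun d =>
    PowerSeries.coeff d (∏ m ∈ (Finset.range (d + 1)).filter P, (1 - PowerSeries.X ^ m))

/-- Truncation-based formal infinite sum `∑_{n ≥ 0} f n` in `ℚ⟦q⟧`
(valid when the order of `f n` is at least `n`). -/
noncomputable def sSum (f : ℕ → PowerSeries ℚ) : PowerSeries ℚ :=
  PowerSeries.mk fun d =>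
    PowerSeries.coeff d (∑ n ∈ Finset.range (d + 1), f n)

/-- Andrews's `J_{k,i}(0, x, q)` specialized at `x = q^j` (`1 ≤ i ≤ k`):
`J_{k,i}(0,q^j,q) = ∑_{n ≥ 0} (-1)^n q^{jkn} q^{kn+kn²+n-in+C(n,2)}
  (1 - q^{i(j+1)+2ni}) / ((q)_n (q^{j+n+1})_∞)`,
where the exponent `kn+kn²+n-in+C(n,2)` is expressed with the (nonnegative)
natural-number subtraction `kn+kn²+n+C(n,2) - in`, valid since `i ≤ k`. -/
noncomputable def Jspec (k i j : ℕ) : PowerSeries ℚ :=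
  sSum (fun n =>
    (-1 : PowerSeries ℚ) ^ n *
    PowerSeries.X ^ (j * k * n + (k * n + k * n ^ 2 + n + n.choose 2 - i * n)) *
    (1 - PowerSeries.X ^ (i * (j + 1) + 2 * n * i)) *
    (∏ t ∈ Finset.Icc 1 n, (1 - PowerSeries.X ^ t))⁻¹ *
    (sProd (fun m => j + n + 1 ≤ m))⁻¹)

/-!
Write `f n` and `g n` for the `n`-th summands of `J_{k,1}(0,q^j,q)` and `J_{k,k}(0,q^{j+1},q)`.
With `h n = (-1)^n q^{jkn+kn+kn²+C(n,2)} (1 - q^n) / ((q)_n (q^{j+n+1})_∞)` one has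
`f n - g n = h n - h (n+1)`, which is a polynomial identity once `h (n+1)` is rewritten with
`(1 - q^{n+1}) / (q)_{n+1} = 1 / (q)_n` and `g n` with
`1 / (q^{j+n+2})_∞ = (1 - q^{j+n+1}) / (q^{j+n+1})_∞`. The partial sums therefore differ by
`h 0 - h (d+1) = -h (d+1)`, and for `k ≥ 1` this is `O(q^{d+1})`, invisible in degree `d`.
-/

namespace PowerSeries

theorem coeff_eq_of_X_pow_dvd_sub {R : Type*} [CommRing R] {A B : R⟦X⟧} {d : ℕ}
    (h : X ^ (d + 1) ∣ A - B) : coeff d A = coeff d B := by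
  rw [← sub_eq_zero, ← map_sub]
  exact X_pow_dvd_iff.mp h d d.lt_succ_self

theorem X_pow_dvd_prod_one_sub_X_pow_sub_one {R : Type*} [CommRing R] {N : ℕ} {S : Finset ℕ}
    (hS : ∀ m ∈ S, N ≤ m) : (X : R⟦X⟧) ^ N ∣ ∏ m ∈ S, (1 - X ^ m) - 1 := by
  refine Finset.prod_induction _ (fun x : R⟦X⟧ => X ^ N ∣ x - 1) ?_ (by simp) ?_
  · intro a b ha hb
    rw [show a * b - 1 = (a - 1) * b + (b - 1) by ring]
    exact dvd_add (ha.mul_right b) hb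
  · intro m hm
    rw [sub_sub_cancel_left, dvd_neg]
    exact pow_dvd_pow X (hS m hm)

theorem constantCoeff_one_sub_X_pow {R : Type*} [CommRing R] {m : ℕ} (hm : m ≠ 0) :
    constantCoeff (1 - X ^ m : R⟦X⟧) = 1 := by
  simp [hm]

theorem mul_inv_mul_cancel_left {k : Type*} [Field k] {a : k⟦X⟧} (b : k⟦X⟧)
    (ha : constantCoeff a ≠ 0) : a * (a * b)⁻¹ = b⁻¹ := by
  rw [PowerSeries.mul_inv_rev, mul_left_comm, PowerSeries.mul_inv_cancel a ha, mul_one]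

end PowerSeries

theorem coeff_prod_range_filter_eq (P : ℕ → Prop) [DecidablePred P] {d M : ℕ} (h : d < M) :
    coeff d (∏ m ∈ (range M).filter P, (1 - X ^ m : ℚ⟦X⟧))
      = coeff d (∏ m ∈ (range (d + 1)).filter P, (1 - X ^ m : ℚ⟦X⟧)) := by
  have hsub : (range (d + 1)).filter P ⊆ (range M).filter P :=
    filter_subset_filter P (range_subset_range.2 h)
  apply coeff_eq_of_X_pow_dvd_sub
  rw [← prod_sdiff hsub, ← sub_one_mul]
  refine dvd_mul_of_dvd_left (X_pow_dvd_prod_one_sub_X_pow_sub_one fun m hm => ?_) _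
  simp only [mem_sdiff, mem_filter, mem_range] at hm
  by_contra! hlt
  exact hm.2 ⟨by omega, hm.1.2⟩

theorem coeff_sProd (P : ℕ → Prop) [DecidablePred P] {d M : ℕ} (h : d < M) :
    coeff d (sProd P) = coeff d (∏ m ∈ (range M).filter P, (1 - X ^ m)) := by
  rw [sProd, coeff_mk, coeff_prod_range_filter_eq P h]

theorem X_pow_dvd_sProd_sub (P : ℕ → Prop) [DecidablePred P] {d M : ℕ} (h : d ≤ M) :
    X ^ d ∣ sProd P - ∏ m ∈ (range M).filter P, (1 - X ^ m) :=
  X_pow_dvd_iff.2 fun m hm => by rw [map_sub, coeff_sProd P (hm.trans_le h), sub_self]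

theorem sProd_le_eq (s : ℕ) :
    sProd (s ≤ ·) = (1 - X ^ s) * sProd (s + 1 ≤ ·) := by
  ext d
  have hinsert : (range (d + s + 1)).filter (s ≤ ·)
      = insert s ((range (d + s + 1)).filter (s + 1 ≤ ·)) := by
    ext m
    simp only [mem_filter, mem_range, mem_insert]
    omega
  rw [coeff_sProd _ (by omega : d < d + s + 1), hinsert, prod_insert (by simp)]
  apply coeff_eq_of_X_pow_dvd_sub
  rw [← mul_sub]
  have hdvd := X_pow_dvd_sProd_sub (s + 1 ≤ ·) (by omega : d + 1 ≤ d + s + 1)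
  exact (dvd_sub_comm.mp hdvd).mul_left _

noncomputable def invQPochhammer (n : ℕ) : ℚ⟦X⟧ :=
  (∏ t ∈ Icc 1 n, (1 - X ^ t))⁻¹

noncomputable def invTailProd (s : ℕ) : ℚ⟦X⟧ :=
  (sProd (s ≤ ·))⁻¹

theorem one_sub_X_pow_mul_invQPochhammer_succ (n : ℕ) :
    (1 - X ^ (n + 1)) * invQPochhammer (n + 1) = invQPochhammer n := by
  have hIcc : Icc 1 (n + 1) = insert (n + 1) (Icc 1 n) := by
    ext m
    simp only [mem_Icc, mem_insert]
    omega
  rw [invQPochhammer, hIcc, prod_insert (by simp)]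
  exact mul_inv_mul_cancel_left _ (by rw [constantCoeff_one_sub_X_pow n.succ_ne_zero]; simp)

theorem one_sub_X_pow_mul_invTailProd {s : ℕ} (hs : s ≠ 0) :
    (1 - X ^ s) * invTailProd s = invTailProd (s + 1) := by
  rw [invTailProd, sProd_le_eq]
  exact mul_inv_mul_cancel_left _ (by rw [constantCoeff_one_sub_X_pow hs]; simp)

theorem sSum_eq_of_sub_eq_sub (f g h : ℕ → ℚ⟦X⟧) (hfg : ∀ n, f n - g n = h n - h (n + 1))
    (h_zero : h 0 = 0) (hX : ∀ n, X ^ n ∣ h n) : sSum f = sSum g := by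
  ext d
  have hd : coeff d (h (d + 1)) = 0 := X_pow_dvd_iff.mp (hX (d + 1)) d d.lt_succ_self
  rw [sSum, sSum, coeff_mk, coeff_mk, ← sub_eq_zero, ← map_sub, ← sum_sub_distrib,
    sum_congr rfl fun n _ => hfg n, sum_range_sub', h_zero, zero_sub, map_neg, hd, neg_zero]

section Jspec

variable (k j : ℕ)

noncomputable def Jtelescope (n : ℕ) : ℚ⟦X⟧ :=
  (-1) ^ n * X ^ (j * k * n + k * n + k * n ^ 2 + n.choose 2) * (1 - X ^ n) *
    invQPochhammer n * invTailProd (j + n + 1)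

theorem Jtelescope_zero : Jtelescope k j 0 = 0 := by
  simp [Jtelescope]

theorem X_pow_dvd_Jtelescope (hk : k ≠ 0) (n : ℕ) : X ^ n ∣ Jtelescope k j n := by
  have hn : n ≤ j * k * n + k * n + k * n ^ 2 + n.choose 2 := by
    have : n ≤ k * n := Nat.le_mul_of_pos_left n (Nat.pos_of_ne_zero hk)
    omega
  unfold Jtelescope
  exact ((((pow_dvd_pow X hn).mul_left _).mul_right _).mul_right _).mul_right _

theorem Jspec_one_eq : Jspec k 1 j = sSum fun n =>
    (-1) ^ n * X ^ (j * k * n + k * n + k * n ^ 2 + n.choose 2) *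
      (1 - X ^ (j + 2 * n + 1)) * invQPochhammer n * invTailProd (j + n + 1) := by
  refine congrArg sSum (funext fun n => ?_)
  have hexp : j * k * n + (k * n + k * n ^ 2 + n + n.choose 2 - 1 * n)
      = j * k * n + k * n + k * n ^ 2 + n.choose 2 := by omega
  rw [hexp, show 1 * (j + 1) + 2 * n * 1 = j + 2 * n + 1 by ring]
  rfl

theorem Jspec_self_succ_eq : Jspec k k (j + 1) = sSum fun n =>
    (-1) ^ n * X ^ (j * k * n + k * n + k * n ^ 2 + n.choose 2 + n) *
      (1 - X ^ (k * j + 2 * k + 2 * n * k)) * invQPochhammer n * invTailProd (j + n + 2) := by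
  refine congrArg sSum (funext fun n => ?_)
  have hexp : (j + 1) * k * n + (k * n + k * n ^ 2 + n + n.choose 2 - k * n)
      = j * k * n + k * n + k * n ^ 2 + n.choose 2 + n := by
    rw [show (j + 1) * k * n = j * k * n + k * n by ring]
    omega
  rw [hexp, show k * (j + 1 + 1) + 2 * n * k = k * j + 2 * k + 2 * n * k by ring,
    show j + 1 + n + 1 = j + n + 2 by omega]
  rfl

theorem Jspec_summand_sub_eq (n : ℕ) :
    (-1) ^ n * X ^ (j * k * n + k * n + k * n ^ 2 + n.choose 2) *
        (1 - X ^ (j + 2 * n + 1)) * invQPochhammer n * invTailProd (j + n + 1)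
      - (-1) ^ n * X ^ (j * k * n + k * n + k * n ^ 2 + n.choose 2 + n) *
        (1 - X ^ (k * j + 2 * k + 2 * n * k)) * invQPochhammer n * invTailProd (j + n + 2)
      = Jtelescope k j n - Jtelescope k j (n + 1) := by
  have hexp : j * k * (n + 1) + k * (n + 1) + k * (n + 1) ^ 2 + (n + 1).choose 2
      = j * k * n + k * n + k * n ^ 2 + n.choose 2 + (n + (k * j + 2 * k + 2 * n * k)) := by
    rw [Nat.choose_succ_succ', Nat.choose_one_right]
    ring
  unfold Jtelescope
  rw [hexp, show j + (n + 1) + 1 = j + n + 2 by omega,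
    ← one_sub_X_pow_mul_invTailProd (by omega : j + n + 1 ≠ 0),
    ← one_sub_X_pow_mul_invQPochhammer_succ n]
  ring

end Jspec

/-- Edge-matching for Andrews's specialized `J`-functions:
`J_{k,1}(0, q^j, q) = J_{k,k}(0, q^{j+1}, q)` for every `j ≥ 0`. -/
theorem Jspec_edge_matching (k : ℕ) (hk : 2 ≤ k) (j : ℕ) :
    Jspec k 1 j = Jspec k k (j + 1) := by
  rw [Jspec_one_eq, Jspec_self_succ_eq]
  exact sSum_eq_of_sub_eq_sub _ _ _ (Jspec_summand_sub_eq k j) (Jtelescope_zero k j)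
    (X_pow_dvd_Jtelescope k j (by omega))
end

section
/- With J_{k,i}(0,x,q) = ∑_{n≥0} (-1)^n x^{kn} q^{kn+kn^2+n−in+C(n,2)} (1 − x^i q^{i+2ni}) / ((q)_n (xq^{n+1})_∞), the specialization x ↦ q^j (j ≥ 0) satisfies: J_{k,k-i+1}(0,q^j,q) = [∑_{n≥0} (-1)^n q^{(2k+1)·C(n,2)+(k(j+1)+i)n}(1−q^{n+1})⋯(1−q^{n+j})(1−q^{(k-i+1)(2n+j+1)})] / (q)_∞, for 1 ≤ i ≤ k. -/
/-!
The identity holds summand by summand. Since `(q)_n (q^{j+n+1})_∞ (1-q^{n+1})⋯(1-q^{n+j}) = (q)_∞`,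
the `n`-th summand of `J_{k,k-i+1}(0,q^j,q)` is `(q)_∞⁻¹` times the `n`-th summand on the right,
once `n² = 2·C(n,2) + n` is used to match the exponents of `q`. Pulling `(q)_∞⁻¹` out of the
truncated sum is legitimate because the `n`-th summand is divisible by `q^n`.
-/

open PowerSeries Finset

lemma coeff_mul_prod_one_sub_X_pow {b : ℕ} (A : ℚ⟦X⟧) {S : Finset ℕ} (h : ∀ m ∈ S, b < m) :
    coeff b (A * ∏ m ∈ S, (1 - X ^ m)) = coeff b A := by
  classical
  induction S using Finset.induction_on with
  | empty => simp
  | @insert a S ha ih =>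
    rw [prod_insert ha, mul_left_comm, sub_mul, one_mul, map_sub,
      coeff_X_pow_mul', if_neg (not_le.mpr (h a (mem_insert_self a S))), sub_zero,
      ih fun m hm => h m (mem_insert_of_mem hm)]

lemma coeff_sProd_of_le (P : ℕ → Prop) [DecidablePred P] {d M : ℕ} (h : d ≤ M) :
    coeff d (sProd P) = coeff d (∏ m ∈ (range (M + 1)).filter P, (1 - X ^ m)) := by
  have hsplit : (range (M + 1)).filter P =
      (range (d + 1)).filter P ∪ (Ico (d + 1) (M + 1)).filter P := by
    rw [← filter_union, range_eq_Ico, range_eq_Ico, Ico_union_Ico_eq_Ico (by omega) (by omega)]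
  have hdisj : Disjoint ((range (d + 1)).filter P) ((Ico (d + 1) (M + 1)).filter P) :=
    disjoint_filter_filter (range_eq_Ico (d + 1) ▸ Ico_disjoint_Ico_consecutive 0 (d + 1) (M + 1))
  rw [sProd, coeff_mk, hsplit, prod_union hdisj, coeff_mul_prod_one_sub_X_pow]
  intro m hm
  simp only [mem_filter, mem_Ico] at hm
  omega

lemma coeff_mul_sProd_of_le (A : ℚ⟦X⟧) (P : ℕ → Prop) [DecidablePred P] {d M : ℕ} (h : d ≤ M) :
    coeff d (A * sProd P) = coeff d (A * ∏ m ∈ (range (M + 1)).filter P, (1 - X ^ m)) := by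
  simp only [coeff_mul]
  refine sum_congr rfl fun p hp => ?_
  rw [coeff_sProd_of_le P ((HasAntidiagonal.antidiagonal.snd_le hp).trans h)]

lemma sProd_eq_prod_mul_sProd (P : ℕ → Prop) [DecidablePred P] (N : ℕ) :
    sProd P = (∏ m ∈ (range (N + 1)).filter P, (1 - X ^ m)) * sProd (fun m => P m ∧ N < m) := by
  ext d
  have hsplit : (range (max d N + 1)).filter P =
      (range (N + 1)).filter P ∪ (range (max d N + 1)).filter (fun m => P m ∧ N < m) := by
    ext m
    by_cases hP : P m
    · simp only [mem_union, mem_filter, mem_range, hP, and_true, true_and]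
      omega
    · simp [hP]
  have hdisj : Disjoint ((range (N + 1)).filter P)
      ((range (max d N + 1)).filter (fun m => P m ∧ N < m)) := by
    simp only [disjoint_left, mem_filter, mem_range]
    intro m hm hm'
    omega
  rw [coeff_sProd_of_le P (le_max_left d N), coeff_mul_sProd_of_le _ _ (le_max_left d N),
    hsplit, prod_union hdisj]

lemma prod_Icc_one_add {M : Type*} [CommMonoid M] (f : ℕ → M) (n j : ℕ) :
    ∏ t ∈ Icc 1 (n + j), f t = (∏ t ∈ Icc 1 n, f t) * ∏ t ∈ Icc 1 j, f (n + t) := by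
  induction j with
  | zero => simp
  | succ j ih =>
    rw [← add_assoc, prod_Icc_succ_top (by omega), ih, prod_Icc_succ_top (by omega), mul_assoc]
    rfl

lemma filter_one_le_range (N : ℕ) : (range (N + 1)).filter (fun m => 1 ≤ m) = Icc 1 N := by
  ext m
  simp only [mem_filter, mem_range, mem_Icc]
  omega

lemma constantCoeff_prod_one_sub_X_pow {S : Finset ℕ} {e : ℕ → ℕ} (h : ∀ m ∈ S, e m ≠ 0) :
    constantCoeff (∏ m ∈ S, (1 - X ^ e m) : ℚ⟦X⟧) = 1 :=
  (map_prod _ _ _).trans (prod_eq_one fun m hm => by simp [zero_pow (h m hm)])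

lemma inv_prod_mul_inv_sProd (n j : ℕ) :
    (∏ t ∈ Icc 1 n, (1 - X ^ t))⁻¹ * (sProd (fun m => j + n + 1 ≤ m))⁻¹ =
      (sProd (fun m => 1 ≤ m))⁻¹ * ∏ t ∈ Icc 1 j, (1 - X ^ (n + t)) := by
  set G : ℚ⟦X⟧ := ∏ t ∈ Icc 1 j, (1 - X ^ (n + t))
  have hsplit : sProd (fun m => 1 ≤ m) =
      (∏ t ∈ Icc 1 n, (1 - X ^ t)) * G * sProd (fun m => j + n + 1 ≤ m) := by
    rw [sProd_eq_prod_mul_sProd _ (n + j), filter_one_le_range, prod_Icc_one_add]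
    congr 2
    ext m
    omega
  have hG : G⁻¹ * G = 1 := by
    refine PowerSeries.inv_mul_cancel G ?_
    rw [constantCoeff_prod_one_sub_X_pow fun t ht => by simp only [mem_Icc] at ht; omega]
    exact one_ne_zero
  rw [hsplit, PowerSeries.mul_inv_rev, PowerSeries.mul_inv_rev]
  linear_combination (-(sProd (fun m => j + n + 1 ≤ m))⁻¹ * (∏ t ∈ Icc 1 n, (1 - X ^ t))⁻¹) * hG

lemma coeff_sSum_of_le {f : ℕ → ℚ⟦X⟧} (hf : ∀ n, X ^ n ∣ f n) {d M : ℕ} (h : d ≤ M) :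
    coeff d (sSum f) = coeff d (∑ n ∈ range (M + 1), f n) := by
  rw [sSum, coeff_mk, map_sum, map_sum]
  refine sum_subset (range_subset_range.mpr (by omega)) fun n _ hn => ?_
  exact X_pow_dvd_iff.mp (hf n) d (by simp only [mem_range] at hn; omega)

lemma mul_sSum (c : ℚ⟦X⟧) {f : ℕ → ℚ⟦X⟧} (hf : ∀ n, X ^ n ∣ f n) :
    c * sSum f = sSum (fun n => c * f n) := by
  ext d
  have htrunc : coeff d (c * sSum f) = coeff d (c * ∑ n ∈ range (d + 1), f n) := by
    simp only [coeff_mul]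
    refine sum_congr rfl fun p hp => ?_
    rw [coeff_sSum_of_le hf (HasAntidiagonal.antidiagonal.snd_le hp)]
  rw [htrunc, mul_sum, sSum, coeff_mk]

lemma Jspec_exponent {k i : ℕ} (hik : i ≤ k) (j n : ℕ) :
    j * k * n + (k * n + k * n ^ 2 + n + n.choose 2 - (k - i + 1) * n) =
      (2 * k + 1) * n.choose 2 + (k * (j + 1) + i) * n := by
  have hsq : n ^ 2 = 2 * n.choose 2 + n := by
    rw [Nat.choose_two_right, Nat.mul_div_cancel' (Nat.even_mul_pred_self n).two_dvd]
    cases n with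
    | zero => rfl
    | succ m => rw [Nat.add_sub_cancel]; ring
  have hle : (k - i + 1) * n ≤ k * n + n := by
    rw [← Nat.succ_mul]
    exact Nat.mul_le_mul_right n (by omega)
  rw [hsq]
  zify [hik, hle.trans (by omega : k * n + n ≤ k * n + k * (2 * n.choose 2 + n) + n + n.choose 2)]
  ring

theorem Jspec_dictionary_general (k i j : ℕ) (hi1 : 1 ≤ i) (hik : i ≤ k) :
    Jspec k (k - i + 1) j =
      (sProd (fun m => 1 ≤ m))⁻¹ * sSum (fun n =>
        (-1 : PowerSeries ℚ) ^ n *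
        PowerSeries.X ^ ((2 * k + 1) * n.choose 2 + (k * (j + 1) + i) * n) *
        (∏ t ∈ Finset.Icc 1 j, (1 - PowerSeries.X ^ (n + t))) *
        (1 - PowerSeries.X ^ ((k - i + 1) * (2 * n + j + 1)))) := by
  have horder : ∀ n, n ≤ (2 * k + 1) * n.choose 2 + (k * (j + 1) + i) * n := fun n =>
    (Nat.le_mul_of_pos_left n (by omega)).trans (Nat.le_add_left _ _)
  rw [Jspec, mul_sSum _ fun n => (((pow_dvd_pow X (horder n)).mul_left _).mul_right _).mul_right _]
  congr 1
  ext1 n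
  rw [Jspec_exponent hik, show (k - i + 1) * (j + 1) + 2 * n * (k - i + 1) =
    (k - i + 1) * (2 * n + j + 1) by ring, mul_assoc _ _ (sProd _)⁻¹, inv_prod_mul_inv_sProd]
  ring

/-- The dictionary between Andrews's specialized `J`-functions and the
Lepowsky–Zhu closed forms:
`J_{k,k-i+1}(0,q^j,q) = [∑_{n ≥ 0} (-1)^n q^{(2k+1)C(n,2)+(k(j+1)+i)n}
  (1-q^{n+1})⋯(1-q^{n+j}) (1-q^{(k-i+1)(2n+j+1)})] / (q)_∞`. -/
theorem Jspec_dictionary (k i j : ℕ) (hk : 2 ≤ k) (hi1 : 1 ≤ i) (hik : i ≤ k) :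
    Jspec k (k - i + 1) j =
      (sProd (fun m => 1 ≤ m))⁻¹ * sSum (fun n =>
        (-1 : PowerSeries ℚ) ^ n *
        PowerSeries.X ^ ((2 * k + 1) * n.choose 2 + (k * (j + 1) + i) * n) *
        (∏ t ∈ Finset.Icc 1 j, (1 - PowerSeries.X ^ (n + t))) *
        (1 - PowerSeries.X ^ ((k - i + 1) * (2 * n + j + 1)))) :=
  Jspec_dictionary_general k i j hi1 hik
end
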